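/- (Solvability for the Jirásek–Grassl model.) Define q_tr(γ) = (3/2)·(ϱ̂_tr(γ)/f̄_c)² + m₀·(ϱ̂_tr(γ)·r/(√6·f̄_c) + p̂_tr(γ)/f̄_c) − 1 for γ ≥ 0. Suppose q_tr(0) > 0. Then the equation q_tr(Δλ) = 0 has exactly one solution Δλ in [0,∞), and this solution satisfies Δλ > 0. Moreover, with γ* = √6·f̄_c·ϱ^tr/(2G·m₀): if q_tr(γ*) < 0 then Δλ ∈ (0, γ*) and ϱ̂_tr(Δλ) > 0; conversely, if q_tr(γ*) ≥ 0 then Δλ ≥ γ* and ϱ̂_tr(Δλ) = 0. -/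
import Mathlib


set_option maxHeartbeats 1000000

noncomputable section

/-- m_g'(p) = A_g·exp((p − f̄_t/3)/(B_g·f̄_c)). -/
def mgp (Ag Bg fc ft p : ℝ) : ℝ := Ag * Real.exp ((p - ft/3) / (Bg * fc))

/-- Auxiliary: inverse parametrization γ = (ptr − p)/((K/fc)·m_g'(p)). -/
def hfun (K fc Ag Bg ft ptr : ℝ) (p : ℝ) : ℝ :=
  (ptr - p) / ((K / fc) * mgp Ag Bg fc ft p)

/-- Auxiliary: explicit formula for ϱ̂_tr. -/
def rfun (G m0 fc ϱtr : ℝ) (γ : ℝ) : ℝ :=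
  (1 / (1 + γ * 6 * G / fc^2)) * max 0 (ϱtr - γ * 2 * G * m0 / (Real.sqrt 6 * fc))

/-- Auxiliary: q_tr as an explicit function of p. -/
def Qfun (G K m0 fc Ag Bg ft r ptr ϱtr : ℝ) (p : ℝ) : ℝ :=
  (3/2) * (rfun G m0 fc ϱtr (hfun K fc Ag Bg ft ptr p) / fc)^2 +
    m0 * (rfun G m0 fc ϱtr (hfun K fc Ag Bg ft ptr p) * r / (Real.sqrt 6 * fc) + p / fc) - 1

/-- solvability of q_tr(Δλ) = 0 for the Jirásek–Grassl model and the
a-priori decision between return to the smooth portion (ϱ̂_tr(Δλ) > 0) and to the apex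
(ϱ̂_tr(Δλ) = 0). -/
theorem qtr_JG_solvability
    (G K m0 fc Ag Bg ft r ptr ϱtr : ℝ)
    (hG : 0 < G) (hK : 0 < K) (hm0 : 0 < m0) (hfc : 0 < fc)
    (hAg : 0 < Ag) (hBg : 0 < Bg) (hft : 0 ≤ ft) (hr : 0 ≤ r) (hϱtr : 0 < ϱtr)
    (ph : ℝ → ℝ)
    (hph : ∀ γ ≥ (0:ℝ), ph γ + γ * (K / fc) * mgp Ag Bg fc ft (ph γ) = ptr)
    (ϱh : ℝ → ℝ)
    (hϱh : ∀ γ, ϱh γ = (1 / (1 + γ * 6 * G / fc^2)) *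
      max 0 (ϱtr - γ * 2 * G * m0 / (Real.sqrt 6 * fc)))
    (q : ℝ → ℝ)
    (hq : ∀ γ, q γ = (3/2) * (ϱh γ / fc)^2 +
      m0 * (ϱh γ * r / (Real.sqrt 6 * fc) + ph γ / fc) - 1)
    (htrial : 0 < q 0) :
    (∃! γ : ℝ, 0 ≤ γ ∧ q γ = 0) ∧
    (∀ Δl : ℝ, 0 ≤ Δl → q Δl = 0 →
      0 < Δl ∧
      (q (Real.sqrt 6 * fc * ϱtr / (2 * G * m0)) < 0 →
        Δl < Real.sqrt 6 * fc * ϱtr / (2 * G * m0) ∧ 0 < ϱh Δl) ∧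
      (0 ≤ q (Real.sqrt 6 * fc * ϱtr / (2 * G * m0)) →
        Real.sqrt 6 * fc * ϱtr / (2 * G * m0) ≤ Δl ∧ ϱh Δl = 0)) := by
  have h6 : (0:ℝ) < Real.sqrt 6 := Real.sqrt_pos.mpr (by norm_num)
  have h6fc : (0:ℝ) < Real.sqrt 6 * fc := mul_pos h6 hfc
  have hcpos : (0:ℝ) < K / fc := div_pos hK hfc
  have hmpos : ∀ p, 0 < mgp Ag Bg fc ft p := fun p => mul_pos hAg (Real.exp_pos _)
  have hmmono : Monotone (mgp Ag Bg fc ft) := by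
    intro a b hab
    unfold mgp
    have h1 : (a - ft/3)/(Bg*fc) ≤ (b - ft/3)/(Bg*fc) := by gcongr
    exact mul_le_mul_of_nonneg_left (Real.exp_le_exp.mpr h1) hAg.le
  -- uniqueness of the solution in p
  have huniqp : ∀ γ : ℝ, 0 ≤ γ → ∀ a b : ℝ,
      a + γ * (K/fc) * mgp Ag Bg fc ft a = ptr →
      b + γ * (K/fc) * mgp Ag Bg fc ft b = ptr → a = b := by
    intro γ hγ a b ha hb
    by_contra hne
    rcases lt_or_gt_of_ne hne with hlt | hlt
    · have h2 := mul_le_mul_of_nonneg_left (hmmono hlt.le) (mul_nonneg hγ hcpos.le)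
      nlinarith
    · have h2 := mul_le_mul_of_nonneg_left (hmmono hlt.le) (mul_nonneg hγ hcpos.le)
      nlinarith
  -- ph is strictly decreasing on [0,∞)
  have hphanti : ∀ γ1 γ2 : ℝ, 0 ≤ γ1 → γ1 < γ2 → ph γ2 < ph γ1 := by
    intro γ1 γ2 h1 h12
    by_contra hle
    push_neg at hle
    have e1 := hph γ1 h1
    have e2 := hph γ2 (le_trans h1 h12.le)
    have hm := hmmono hle
    have hA := mul_le_mul_of_nonneg_left hm (mul_nonneg h1 hcpos.le)
    have hB := mul_lt_mul_of_pos_right h12 (mul_pos hcpos (hmpos (ph γ2)))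
    nlinarith
  -- facts about hfun
  have hhnn : ∀ p : ℝ, p ≤ ptr → 0 ≤ hfun K fc Ag Bg ft ptr p := by
    intro p hp
    exact div_nonneg (by linarith) (mul_pos hcpos (hmpos p)).le
  have hhsolve : ∀ p : ℝ,
      p + hfun K fc Ag Bg ft ptr p * (K/fc) * mgp Ag Bg fc ft p = ptr := by
    intro p
    have h1 : (K/fc) * mgp Ag Bg fc ft p ≠ 0 := (mul_pos hcpos (hmpos p)).ne'
    unfold hfun
    rw [mul_assoc, div_mul_cancel₀ _ h1]
    ring
  have hphinv : ∀ p : ℝ, p ≤ ptr → ph (hfun K fc Ag Bg ft ptr p) = p := by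
    intro p hp
    exact huniqp _ (hhnn p hp) _ _ (hph _ (hhnn p hp)) (hhsolve p)
  -- facts about ϱh
  have hden : ∀ γ : ℝ, 0 ≤ γ → 0 < 1 + γ * 6 * G / fc^2 := by
    intro γ hγ
    have : (0:ℝ) ≤ γ * 6 * G / fc^2 :=
      div_nonneg (mul_nonneg (mul_nonneg hγ (by norm_num)) hG.le) (by positivity)
    linarith
  have hxnn : ∀ γ : ℝ, 0 ≤ γ → 0 ≤ γ * 2 * G * m0 / (Real.sqrt 6 * fc) := by
    intro γ hγ
    exact div_nonneg (by positivity) h6fc.le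
  have hreq : ∀ γ, rfun G m0 fc ϱtr γ = ϱh γ := fun γ => by rw [hϱh]; rfl
  have hϱnn : ∀ γ : ℝ, 0 ≤ γ → 0 ≤ ϱh γ := by
    intro γ hγ
    rw [hϱh]
    exact mul_nonneg (by positivity) (le_max_left _ _)
  have hϱle : ∀ γ : ℝ, 0 ≤ γ → ϱh γ ≤ ϱtr := by
    intro γ hγ
    rw [hϱh]
    have hM : max 0 (ϱtr - γ * 2 * G * m0 / (Real.sqrt 6 * fc)) ≤ ϱtr :=
      max_le hϱtr.le (by linarith [hxnn γ hγ])
    have hf1 : 1 / (1 + γ * 6 * G / fc^2) ≤ 1 := by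
      rw [div_le_one (hden γ hγ)]
      have : (0:ℝ) ≤ γ * 6 * G / fc^2 :=
        div_nonneg (mul_nonneg (mul_nonneg hγ (by norm_num)) hG.le) (by positivity)
      linarith
    calc (1 / (1 + γ * 6 * G / fc^2)) * max 0 (ϱtr - γ * 2 * G * m0 / (Real.sqrt 6 * fc))
        ≤ 1 * ϱtr := mul_le_mul hf1 hM (le_max_left _ _) zero_le_one
      _ = ϱtr := one_mul _
  have hϱanti : ∀ γ1 γ2 : ℝ, 0 ≤ γ1 → γ1 ≤ γ2 → ϱh γ2 ≤ ϱh γ1 := by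
    intro γ1 γ2 h1 h12
    rw [hϱh, hϱh]
    have h2 : (0:ℝ) ≤ γ2 := le_trans h1 h12
    apply mul_le_mul
    · apply one_div_le_one_div_of_le (hden γ1 h1)
      have : γ1 * 6 * G / fc^2 ≤ γ2 * 6 * G / fc^2 := by gcongr
      linarith
    · apply max_le_max le_rfl
      have : γ1 * 2 * G * m0 / (Real.sqrt 6 * fc) ≤ γ2 * 2 * G * m0 / (Real.sqrt 6 * fc) := by
        gcongr
      linarith
    · exact le_max_left _ _
    · exact (one_div_pos.mpr (hden γ1 h1)).le
  -- q is strictly decreasing on [0,∞)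
  have hqanti : ∀ γ1 γ2 : ℝ, 0 ≤ γ1 → γ1 < γ2 → q γ2 < q γ1 := by
    intro γ1 γ2 h1 h12
    have h2 : (0:ℝ) ≤ γ2 := le_trans h1 h12.le
    rw [hq, hq]
    have hρ12 := hϱanti γ1 γ2 h1 h12.le
    have hρ2 := hϱnn γ2 h2
    have hph12 := hphanti γ1 γ2 h1 h12
    have hA : (ϱh γ2 / fc)^2 ≤ (ϱh γ1 / fc)^2 := by
      have hd2 : (0:ℝ) ≤ ϱh γ2 / fc := div_nonneg hρ2 hfc.le
      have hd12 : ϱh γ2 / fc ≤ ϱh γ1 / fc := by gcongr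
      nlinarith
    have hB : ϱh γ2 * r / (Real.sqrt 6 * fc) ≤ ϱh γ1 * r / (Real.sqrt 6 * fc) := by
      gcongr
    have hC : ph γ2 / fc < ph γ1 / fc := by gcongr
    nlinarith [mul_le_mul_of_nonneg_left hB hm0.le, mul_lt_mul_of_pos_left hC hm0]
  have huq : ∀ a b : ℝ, 0 ≤ a → 0 ≤ b → q a = 0 → q b = 0 → a = b := by
    intro a b ha hb hqa hqb
    rcases lt_trichotomy a b with h | h | h
    · have := hqanti a b ha h; linarith
    · exact h
    · have := hqanti b a hb h; linarith
  -- relation between q and Qfun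
  have hQq : ∀ p : ℝ, p ≤ ptr → q (hfun K fc Ag Bg ft ptr p) = Qfun G K m0 fc Ag Bg ft r ptr ϱtr p := by
    intro p hp
    rw [hq, hϱh, hphinv p hp]
    rfl
  -- continuity of Qfun
  have hcontm : Continuous (mgp Ag Bg fc ft) := by unfold mgp; fun_prop
  have hcont_h : Continuous (hfun K fc Ag Bg ft ptr) := by
    unfold hfun
    exact (continuous_const.sub continuous_id).div (continuous_const.mul hcontm)
      (fun x => (mul_pos hcpos (hmpos x)).ne')
  have hcontr : ContinuousOn (rfun G m0 fc ϱtr) (Set.Ici 0) := by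
    unfold rfun
    apply ContinuousOn.mul
    · exact ContinuousOn.div continuousOn_const (by fun_prop)
        (fun γ hγ => (hden γ hγ).ne')
    · exact (continuous_const.max (by fun_prop)).continuousOn
  -- the lower endpoint p1
  have habs : ∀ Z pp : ℝ, 0 ≤ Z → Z ≤ ϱtr →
      pp ≤ (1 - ((3/2) * (ϱtr/fc)^2 + m0 * (ϱtr * r / (Real.sqrt 6 * fc)))) * fc / m0 - 1 →
      (3/2) * (Z / fc)^2 + m0 * (Z * r / (Real.sqrt 6 * fc) + pp / fc) - 1 < 0 := by
    intro Z pp h0Z hZle hpp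
    have key1 : (Z/fc)^2 ≤ (ϱtr/fc)^2 := by
      have hd2 : (0:ℝ) ≤ Z / fc := div_nonneg h0Z hfc.le
      have hd12 : Z / fc ≤ ϱtr / fc := by gcongr
      nlinarith
    have key2 : Z * r / (Real.sqrt 6 * fc) ≤ ϱtr * r / (Real.sqrt 6 * fc) := by gcongr
    have key3 : pp / fc ≤
        ((1 - ((3/2) * (ϱtr/fc)^2 + m0 * (ϱtr * r / (Real.sqrt 6 * fc)))) * fc / m0 - 1) / fc := by
      gcongr
    have key4 : m0 * (((1 - ((3/2) * (ϱtr/fc)^2 + m0 * (ϱtr * r / (Real.sqrt 6 * fc)))) * fc / m0 - 1) / fc)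
        = (1 - ((3/2) * (ϱtr/fc)^2 + m0 * (ϱtr * r / (Real.sqrt 6 * fc)))) - m0 / fc := by
      field_simp
    have key5 : 0 < m0 / fc := div_pos hm0 hfc
    have key2' := mul_le_mul_of_nonneg_left key2 hm0.le
    have key3' := mul_le_mul_of_nonneg_left key3 hm0.le
    nlinarith [key1, key2', key3', key4, key5]
  set p1 : ℝ := min ptr
    ((1 - ((3/2) * (ϱtr/fc)^2 + m0 * (ϱtr * r / (Real.sqrt 6 * fc)))) * fc / m0 - 1) with hp1
  have hp1le : p1 ≤ ptr := min_le_left _ _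
  have hcρ : ContinuousOn (fun p => rfun G m0 fc ϱtr (hfun K fc Ag Bg ft ptr p))
      (Set.Icc p1 ptr) := by
    apply hcontr.comp hcont_h.continuousOn
    intro p hp
    exact hhnn p hp.2
  have hQcont : ContinuousOn (Qfun G K m0 fc Ag Bg ft r ptr ϱtr) (Set.Icc p1 ptr) := by
    unfold Qfun
    apply ContinuousOn.sub _ continuousOn_const
    apply ContinuousOn.add
    · exact continuousOn_const.mul ((hcρ.div_const fc).pow 2)
    · apply continuousOn_const.mul
      exact ((hcρ.mul continuousOn_const).div_const _).add (continuousOn_id.div_const _)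
  -- values at the endpoints
  have hh_ptr : hfun K fc Ag Bg ft ptr ptr = 0 := by unfold hfun; simp
  have hQptr : 0 < Qfun G K m0 fc Ag Bg ft r ptr ϱtr ptr := by
    rw [← hQq ptr le_rfl, hh_ptr]; exact htrial
  have hQp1 : Qfun G K m0 fc Ag Bg ft r ptr ϱtr p1 < 0 := by
    have hγ1 : 0 ≤ hfun K fc Ag Bg ft ptr p1 := hhnn p1 hp1le
    have h0ρ : 0 ≤ rfun G m0 fc ϱtr (hfun K fc Ag Bg ft ptr p1) := by
      rw [hreq]; exact hϱnn _ hγ1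
    have hρle : rfun G m0 fc ϱtr (hfun K fc Ag Bg ft ptr p1) ≤ ϱtr := by
      rw [hreq]; exact hϱle _ hγ1
    exact habs _ _ h0ρ hρle (min_le_right _ _)
  -- existence via IVT
  obtain ⟨p0, hp0mem, hp0eq⟩ :=
    intermediate_value_Icc hp1le hQcont (Set.mem_Icc.mpr ⟨hQp1.le, hQptr.le⟩)
  have hγ0 : 0 ≤ hfun K fc Ag Bg ft ptr p0 := hhnn p0 hp0mem.2
  have hqγ0 : q (hfun K fc Ag Bg ft ptr p0) = 0 := by
    rw [hQq p0 hp0mem.2]; exact hp0eq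
  constructor
  · exact ⟨hfun K fc Ag Bg ft ptr p0, ⟨hγ0, hqγ0⟩,
      fun y hy => huq y _ hy.1 hγ0 hy.2 hqγ0⟩
  · intro Δl hΔ hqΔ
    have hγs : 0 < Real.sqrt 6 * fc * ϱtr / (2 * G * m0) := by positivity
    have hkey : (Real.sqrt 6 * fc * ϱtr / (2 * G * m0)) * 2 * G * m0 / (Real.sqrt 6 * fc)
        = ϱtr := by
      field_simp
    refine ⟨?_, ?_, ?_⟩
    · rcases eq_or_lt_of_le hΔ with h | h
      · exfalso; rw [← h] at hqΔ; linarith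
      · exact h
    · intro hneg
      have hlt : Δl < Real.sqrt 6 * fc * ϱtr / (2 * G * m0) := by
        by_contra h
        push_neg at h
        rcases eq_or_lt_of_le h with h' | h'
        · rw [h'] at hneg; linarith
        · have := hqanti _ _ hγs.le h'; linarith
      have hsub : 0 < ϱtr - Δl * 2 * G * m0 / (Real.sqrt 6 * fc) := by
        have hstep : Δl * 2 * G * m0 / (Real.sqrt 6 * fc) <
            (Real.sqrt 6 * fc * ϱtr / (2 * G * m0)) * 2 * G * m0 / (Real.sqrt 6 * fc) := by
          gcongr
        rw [hkey] at hstep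
        linarith
      refine ⟨hlt, ?_⟩
      rw [hϱh]
      exact mul_pos (one_div_pos.mpr (hden Δl hΔ)) (lt_of_lt_of_le hsub (le_max_right _ _))
    · intro hpos
      have hge : Real.sqrt 6 * fc * ϱtr / (2 * G * m0) ≤ Δl := by
        by_contra h
        push_neg at h
        have := hqanti _ _ hΔ h
        linarith
      have hsub : ϱtr - Δl * 2 * G * m0 / (Real.sqrt 6 * fc) ≤ 0 := by
        have hstep : (Real.sqrt 6 * fc * ϱtr / (2 * G * m0)) * 2 * G * m0 / (Real.sqrt 6 * fc)
            ≤ Δl * 2 * G * m0 / (Real.sqrt 6 * fc) := by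
          gcongr
        rw [hkey] at hstep
        linarith
      refine ⟨hge, ?_⟩
      rw [hϱh, max_eq_left hsub, mul_zero]
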